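/- arXiv:1908.04159 — 5 statements merged into one kernel-verified Lean document; each statement's English description precedes it below -/
import Mathlib

section
/- Let l ≥ 1, let α_1,…,α_l and γ_1,…,γ_l be positive real constants, and let F : ℂ^l → ℂ be differentiable in the real sense. Define f_k : ℂ^l → ℂ by condition (H3), i.e. f_k(z) = ∂F/∂z̄_k(z) + conj(∂F/∂z_k(z)) = 2 ∂(Re F)/∂z̄_k(z), and assume condition (H4). Then the gauge condition holds: for every θ ∈ ℝ, every z = (z_1,…,z_l) ∈ ℂ^l and every k ∈ {1,…,l}, f_k(e^{i(α_1/γ_1)θ} z_1, …, e^{i(α_l/γ_l)θ} z_l) = e^{i(α_k/γ_k)θ} f_k(z_1,…,z_l). -/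
/-
Write `G = Re F`. Condition (H3) says that `f_k(w)` is the complex number `ζ` representing the
real-linear form `u ↦ DG(w)(u e_k)` as `u ↦ Re(conj ζ * u)`. Differentiating the invariance
`G(c * w) = G(w)` of (H4), with `c_m = e^{i(α_m/γ_m)θ}`, gives `DG(c * z)(c_k u e_k) = DG(z)(u e_k)`,
so the representative of `DG(z)(· e_k)` is `conj c_k * f_k(c * z)`. Since `|c_k| = 1`, this is the
gauge condition.
-/

open Complex MeasureTheory

/-- Wirtinger derivative `∂h/∂z_m` of a function `h : ℂ^l → ℂ`, differentiable in the
real sense: `(1/2)(∂h/∂x_m − i ∂h/∂y_m)`. -/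
noncomputable def wderiv {l : ℕ} (h : (Fin l → ℂ) → ℂ) (m : Fin l) (z : Fin l → ℂ) : ℂ :=
  (1 / 2) * (fderiv ℝ h z (Pi.single m 1) - Complex.I * fderiv ℝ h z (Pi.single m Complex.I))

/-- Conjugate Wirtinger derivative `∂h/∂z̄_m = (1/2)(∂h/∂x_m + i ∂h/∂y_m)`. -/
noncomputable def wderivBar {l : ℕ} (h : (Fin l → ℂ) → ℂ) (m : Fin l) (z : Fin l → ℂ) : ℂ :=
  (1 / 2) * (fderiv ℝ h z (Pi.single m 1) + Complex.I * fderiv ℝ h z (Pi.single m Complex.I))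

open ComplexConjugate

/-- The unique `ζ : ℂ` with `L u = Re (conj ζ * u)` for all `u`. -/
noncomputable def complexGradient (L : ℂ →L[ℝ] ℝ) : ℂ :=
  L 1 + I * L I

theorem complexGradient_comp_mul (L : ℂ →L[ℝ] ℝ) (c : ℂ) :
    complexGradient (L.comp (ContinuousLinearMap.mul ℝ ℂ c)) = conj c * complexGradient L := by
  have hc : c * 1 = c.re • (1 : ℂ) + c.im • I := by
    apply Complex.ext <;> simp
  have hcI : c * I = (-c.im) • (1 : ℂ) + c.re • I := by
    apply Complex.ext <;> simp
  simp only [complexGradient, ContinuousLinearMap.comp_apply, ContinuousLinearMap.mul_apply',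
    hc, hcI, map_add, map_smul, smul_eq_mul]
  apply Complex.ext <;> simp; ring

theorem wderivBar_add_conj_wderiv {l : ℕ} {h : (Fin l → ℂ) → ℂ} {z : Fin l → ℂ}
    (hh : DifferentiableAt ℝ h z) (m : Fin l) :
    wderivBar h m z + conj (wderiv h m z) =
      complexGradient ((fderiv ℝ (fun w => (h w).re) z).comp
        (ContinuousLinearMap.single ℝ (fun _ => ℂ) m)) := by
  have hre : fderiv ℝ (fun w => (h w).re) z = reCLM.comp (fderiv ℝ h z) :=
    (reCLM.hasFDerivAt.comp z hh.hasFDerivAt).fderiv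
  rw [hre, wderivBar, wderiv, complexGradient]
  apply Complex.ext <;> simp <;> ring

theorem fderiv_comp_eq_of_comp_eq {𝕜 E F : Type*} [NontriviallyNormedField 𝕜]
    [NormedAddCommGroup E] [NormedSpace 𝕜 E] [NormedAddCommGroup F] [NormedSpace 𝕜 F]
    {G : E → F} {T : E →L[𝕜] E} (hGT : G ∘ T = G) {z : E} (hG : DifferentiableAt 𝕜 G (T z)) :
    (fderiv 𝕜 G (T z)).comp T = fderiv 𝕜 G z := by
  conv_rhs => rw [← hGT, fderiv_comp z hG T.differentiableAt, T.fderiv]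

theorem mul_comp_single {ι : Type*} [Fintype ι] [DecidableEq ι] (c : ι → ℂ) (k : ι) :
    (ContinuousLinearMap.mul ℝ (ι → ℂ) c).comp (ContinuousLinearMap.single ℝ (fun _ => ℂ) k) =
      (ContinuousLinearMap.single ℝ (fun _ => ℂ) k).comp (ContinuousLinearMap.mul ℝ ℂ (c k)) := by
  ext u : 1
  exact (Pi.single_mul_right (f := c) u).symm

theorem exp_I_mul_ofReal_mul_conj_self (r : ℝ) : exp (I * r) * conj (exp (I * r)) = 1 := by
  rw [← exp_conj, ← exp_add, map_mul, conj_I, conj_ofReal, neg_mul, add_neg_cancel, exp_zero]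

theorem stmt_5_general (l : ℕ) (α γ : Fin l → ℝ)
    (F : (Fin l → ℂ) → ℂ) (hF : Differentiable ℝ F)
    (f : Fin l → (Fin l → ℂ) → ℂ)
    -- (H3)
    (hf : ∀ (k : Fin l) (z : Fin l → ℂ),
      f k z = wderivBar F k z + (starRingEnd ℂ) (wderiv F k z))
    -- (H4)
    (hH4 : ∀ (θ : ℝ) (z : Fin l → ℂ),
      (F (fun m => Complex.exp (Complex.I * ((α m / γ m : ℝ) : ℂ) * (θ : ℂ)) * z m)).re
        = (F z).re) :
    -- Gauge condition (GC)
    ∀ (θ : ℝ) (z : Fin l → ℂ) (k : Fin l),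
      f k (fun m => Complex.exp (Complex.I * ((α m / γ m : ℝ) : ℂ) * (θ : ℂ)) * z m)
        = Complex.exp (Complex.I * ((α k / γ k : ℝ) : ℂ) * (θ : ℂ)) * f k z := by
  intro θ z k
  set c : Fin l → ℂ := fun m => exp (I * ((α m / γ m : ℝ) : ℂ) * (θ : ℂ)) with hc
  set T := ContinuousLinearMap.mul ℝ (Fin l → ℂ) c
  have hinv : (fun w => (F w).re) ∘ T = fun w => (F w).re := funext (hH4 θ)
  have hG : DifferentiableAt ℝ (fun w => (F w).re) (T z) :=
    (reCLM.differentiable.comp hF) (T z)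
  have hrot : f k z = conj (c k) * f k (T z) := by
    rw [hf, hf, wderivBar_add_conj_wderiv (hF z), wderivBar_add_conj_wderiv (hF (T z)),
      ← fderiv_comp_eq_of_comp_eq hinv hG, ContinuousLinearMap.comp_assoc, mul_comp_single,
      ← ContinuousLinearMap.comp_assoc, complexGradient_comp_mul]
  have hunit : c k * conj (c k) = 1 := by
    simpa only [hc, mul_assoc, ← ofReal_mul] using exp_I_mul_ofReal_mul_conj_self (α k / γ k * θ)
  change f k (T z) = c k * f k z
  rw [hrot, ← mul_assoc, hunit, one_mul]

theorem stmt_5 (l : ℕ) (hl : 1 ≤ l) (α γ : Fin l → ℝ)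
    (hα : ∀ k, 0 < α k) (hγ : ∀ k, 0 < γ k)
    (F : (Fin l → ℂ) → ℂ) (hF : Differentiable ℝ F)
    (f : Fin l → (Fin l → ℂ) → ℂ)
    -- (H3)
    (hf : ∀ (k : Fin l) (z : Fin l → ℂ),
      f k z = wderivBar F k z + (starRingEnd ℂ) (wderiv F k z))
    -- (H4)
    (hH4 : ∀ (θ : ℝ) (z : Fin l → ℂ),
      (F (fun m => Complex.exp (Complex.I * ((α m / γ m : ℝ) : ℂ) * (θ : ℂ)) * z m)).re
        = (F z).re) :
    -- Gauge condition (GC)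
    ∀ (θ : ℝ) (z : Fin l → ℂ) (k : Fin l),
      f k (fun m => Complex.exp (Complex.I * ((α m / γ m : ℝ) : ℂ) * (θ : ℂ)) * z m)
        = Complex.exp (Complex.I * ((α k / γ k : ℝ) : ℂ) * (θ : ℂ)) * f k z :=
  stmt_5_general l α γ F hF f hf hH4
end

section
/- Let l ≥ 1, let α_1,…,α_l and γ_1,…,γ_l be positive real constants, and let F : ℂ^l → ℂ be differentiable in the real sense. Define f_k : ℂ^l → ℂ by condition (H3) and assume condition (H4). Then for every z = (z_1,…,z_l) ∈ ℂ^l: Im ∑_{k=1}^l (α_k/γ_k) f_k(z) · conj(z_k) = 0. -/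
open Complex MeasureTheory

/-!
Differentiating (H4) in `θ` at `θ = 0` shows that `Re F` has zero derivative at `z` along the
infinitesimal rotation `v = (i (α_k/γ_k) z_k)_k`. Since `f_k = ∂_{x_k} Re F + i ∂_{y_k} Re F`,
that directional derivative is exactly `Im ∑_k (α_k/γ_k) f_k(z) conj(z_k)`.
-/

lemma wderivBar_add_conj_wderiv_s6 {l : ℕ} (h : (Fin l → ℂ) → ℂ) (k : Fin l) (z : Fin l → ℂ) :
    wderivBar h k z + starRingEnd ℂ (wderiv h k z) =
      ((fderiv ℝ h z (Pi.single k 1)).re : ℂ) + (fderiv ℝ h z (Pi.single k I)).re * I := by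
  apply Complex.ext <;> simp [wderiv, wderivBar] <;> ring

lemma ContinuousLinearMap.apply_eq_sum_re_smul_add_im_smul {ι M : Type*} [Fintype ι]
    [DecidableEq ι] [AddCommGroup M] [Module ℝ M] [TopologicalSpace M]
    (L : (ι → ℂ) →L[ℝ] M) (w : ι → ℂ) :
    L w = ∑ k, ((w k).re • L (Pi.single k 1) + (w k).im • L (Pi.single k I)) := by
  have hsingle (k : ι) :
      Pi.single k (w k) =
        (w k).re • (Pi.single k 1 : ι → ℂ) + (w k).im • (Pi.single k I : ι → ℂ) := by
    rw [← Pi.single_smul', ← Pi.single_smul', ← Pi.single_add, real_smul, real_smul, mul_one,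
      re_add_im]
  conv_lhs => rw [← Finset.univ_sum_single w]
  simp only [map_sum, hsingle, map_add, map_smul]

lemma hasDerivAt_rotation {ι : Type*} [Fintype ι] (c : ι → ℝ) (z : ι → ℂ) :
    HasDerivAt (fun θ : ℝ => fun m => exp (I * (c m : ℂ) * θ) * z m)
      (fun m => I * c m * z m) 0 := by
  rw [hasDerivAt_pi]
  intro m
  have h := ((((hasDerivAt_id (0 : ℂ)).const_mul (I * (c m : ℂ))).cexp).mul_const (z m))
  simpa using h.comp_ofReal

lemma re_fderiv_eq_zero_of_re_comp_const {E : Type*} [NormedAddCommGroup E] [NormedSpace ℝ E]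
    {F : E → ℂ} {φ : ℝ → E} {v : E} (hF : DifferentiableAt ℝ F (φ 0))
    (hφ : HasDerivAt φ v 0) (hconst : ∀ θ, (F (φ θ)).re = (F (φ 0)).re) :
    (fderiv ℝ F (φ 0) v).re = 0 := by
  have hderiv := reCLM.hasFDerivAt.comp_hasDerivAt 0 (hF.hasFDerivAt.comp_hasDerivAt 0 hφ)
  have hconst_deriv : HasDerivAt (fun θ => (F (φ θ)).re) 0 0 := by
    simpa only [hconst] using hasDerivAt_const (0 : ℝ) (F (φ 0)).re
  exact hderiv.unique hconst_deriv

theorem stmt_6_general (l : ℕ) (α γ : Fin l → ℝ)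
    (F : (Fin l → ℂ) → ℂ) (hF : Differentiable ℝ F)
    (f : Fin l → (Fin l → ℂ) → ℂ)
    -- (H3)
    (hf : ∀ (k : Fin l) (z : Fin l → ℂ),
      f k z = wderivBar F k z + (starRingEnd ℂ) (wderiv F k z))
    -- (H4)
    (hH4 : ∀ (θ : ℝ) (z : Fin l → ℂ),
      (F (fun m => Complex.exp (Complex.I * ((α m / γ m : ℝ) : ℂ) * (θ : ℂ)) * z m)).re
        = (F z).re) :
    ∀ z : Fin l → ℂ,
      (∑ k, ((α k / γ k : ℝ) : ℂ) * f k z * (starRingEnd ℂ) (z k)).im = 0 := by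
  intro z
  set c : Fin l → ℝ := fun k => α k / γ k
  have hrot := hasDerivAt_rotation c z
  have hz : (fun m => exp (I * (c m : ℂ) * ((0 : ℝ) : ℂ)) * z m) = z := by simp
  have hzero := re_fderiv_eq_zero_of_re_comp_const (hz ▸ hF z) hrot
    (by simpa only [hz] using fun θ => hH4 θ z)
  rw [hz, ContinuousLinearMap.apply_eq_sum_re_smul_add_im_smul, re_sum] at hzero
  rw [← hzero, im_sum]
  refine Finset.sum_congr rfl fun k _ => ?_
  rw [hf, wderivBar_add_conj_wderiv_s6]
  simp only [mul_re, mul_im, add_re, add_im, ofReal_re, ofReal_im, I_re, I_im, conj_re, conj_im,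
    real_smul]
  ring

theorem stmt_6 (l : ℕ) (hl : 1 ≤ l) (α γ : Fin l → ℝ)
    (hα : ∀ k, 0 < α k) (hγ : ∀ k, 0 < γ k)
    (F : (Fin l → ℂ) → ℂ) (hF : Differentiable ℝ F)
    (f : Fin l → (Fin l → ℂ) → ℂ)
    -- (H3)
    (hf : ∀ (k : Fin l) (z : Fin l → ℂ),
      f k z = wderivBar F k z + (starRingEnd ℂ) (wderiv F k z))
    -- (H4)
    (hH4 : ∀ (θ : ℝ) (z : Fin l → ℂ),
      (F (fun m => Complex.exp (Complex.I * ((α m / γ m : ℝ) : ℂ) * (θ : ℂ)) * z m)).re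
        = (F z).re) :
    ∀ z : Fin l → ℂ,
      (∑ k, ((α k / γ k : ℝ) : ℂ) * f k z * (starRingEnd ℂ) (z k)).im = 0 :=
  stmt_6_general l α γ F hF f hf hH4
end

section
/- Let l ≥ 1, let F : ℂ^l → ℂ be differentiable in the real sense and homogeneous of degree 3, and define f_k by condition (H3). Assume the functions f_k are differentiable in the real sense and satisfy conditions (H1) and (H2). Then there is a constant C' > 0, depending only on the constant C of (H2) and on l, such that for all z, z' ∈ ℂ^l: |Re F(z) − Re F(z')| ≤ C' ∑_{m=1}^l ∑_{j=1}^l (|z_j|² + |z_j'|²) |z_m − z_m'|, and moreover |Re F(z)| ≤ C' ∑_{j=1}^l |z_j|³. -/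
/-!
Differentiating `F (c • z) = c ^ 3 • F z` shows that `DF` is positively homogeneous of degree 2,
hence so is each `f k` by (H3), and then `D (f k)` is homogeneous of degree 1, so it vanishes at
`0`. With (H2) at `z' = 0` this bounds the Wirtinger derivatives of `f k` at `w` by `C l ‖w‖`
(sup norm), so `‖D (f k) w‖ ≤ 2 C l² ‖w‖` and, by the mean value inequality,
`‖f k w‖ ≤ 2 C l² ‖w‖²`. By (H3), `D (Re F) w v = Re ∑ₖ f k w * conj (v k)`, so
`‖D (Re F) w‖ ≤ 2 C l³ ‖w‖²`, and the mean value inequality on `[z', z]` gives both estimates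
with `C' = 2 C l³` (for the second one, `F 0 = 0` by homogeneity).
-/

open Complex MeasureTheory

def IsPosHomogeneous {E G : Type*} [SMul ℝ E] [SMul ℝ G] (n : ℕ) (F : E → G) : Prop :=
  ∀ c : ℝ, 0 < c → ∀ z, F (c • z) = c ^ n • F z

section

variable {E G : Type*} [NormedAddCommGroup E] [NormedSpace ℝ E] [NormedAddCommGroup G]
  [NormedSpace ℝ G] {F : E → G} {n : ℕ}

theorem IsPosHomogeneous.map_zero (hF : IsPosHomogeneous n F) (hn : n ≠ 0) : F 0 = 0 := by
  have h : F 0 = (2 : ℝ) ^ n • F 0 := by simpa using hF 2 two_pos 0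
  have h2 : (2 : ℝ) ^ n - 1 ≠ 0 := (sub_pos.mpr (one_lt_pow₀ one_lt_two hn)).ne'
  refine (smul_eq_zero.mp ?_).resolve_left h2
  rw [sub_smul, one_smul, ← h, sub_self]

theorem IsPosHomogeneous.fderiv (hF : IsPosHomogeneous (n + 1) F) :
    IsPosHomogeneous n (_root_.fderiv ℝ F) := by
  intro c hc z
  have h : c • _root_.fderiv ℝ F (c • z) = c • c ^ n • _root_.fderiv ℝ F z := by
    have hFc : (F <| c • ·) = c ^ (n + 1) • F := funext (hF c hc)
    rw [← fderiv_comp_smul, hFc, fderiv_const_smul_field, smul_smul, ← pow_succ']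
    rfl
  exact smul_right_injective _ hc.ne' h

theorem norm_sub_le_of_norm_fderiv_le_mul_pow {g : E → G} (hg : Differentiable ℝ g) {K : ℝ}
    (hK : 0 ≤ K) (hD : ∀ u, ‖fderiv ℝ g u‖ ≤ K * ‖u‖ ^ n) (a b : E) :
    ‖g a - g b‖ ≤ K * max ‖b‖ ‖a‖ ^ n * ‖a - b‖ := by
  refine (convex_segment b a).norm_image_sub_le_of_norm_fderiv_le (fun u _ => hg u)
    (fun u hu => (hD u).trans ?_) (left_mem_segment ℝ b a) (right_mem_segment ℝ b a)
  have hu : ‖u‖ ≤ max ‖b‖ ‖a‖ :=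
    (convexOn_norm convex_univ).le_max_of_mem_segment trivial trivial hu
  gcongr

end

theorem pi_norm_pow_le_sum_pow {ι : Type*} [Fintype ι] {E : ι → Type*}
    [∀ i, SeminormedAddCommGroup (E i)] (x : ∀ i, E i) {n : ℕ} (hn : n ≠ 0) :
    ‖x‖ ^ n ≤ ∑ i, ‖x i‖ ^ n := by
  rcases isEmpty_or_nonempty ι with hι | hι
  · simp [Subsingleton.elim x 0, hn]
  · obtain ⟨i, -, hi⟩ := Finset.exists_mem_eq_sup Finset.univ Finset.univ_nonempty
      fun i => ‖x i‖₊
    have hxi : ‖x‖ = ‖x i‖ := congrArg NNReal.toReal ((Pi.nnnorm_def x).trans hi)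
    rw [hxi]
    exact Finset.single_le_sum (f := fun j => ‖x j‖ ^ n) (fun j _ => by positivity)
      (Finset.mem_univ i)

theorem max_sq_mul_norm_sub_le {ι : Type*} [Fintype ι] {E : Type*} [SeminormedAddCommGroup E]
    (a b : ι → E) :
    max ‖b‖ ‖a‖ ^ 2 * ‖a - b‖ ≤ ∑ m, ∑ j, (‖a j‖ ^ 2 + ‖b j‖ ^ 2) * ‖a m - b m‖ := by
  have hmax : max ‖b‖ ‖a‖ ^ 2 ≤ ∑ j, (‖a j‖ ^ 2 + ‖b j‖ ^ 2) := by
    rw [Finset.sum_add_distrib]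
    calc max ‖b‖ ‖a‖ ^ 2 ≤ ‖a‖ ^ 2 + ‖b‖ ^ 2 := by
          rcases le_total ‖b‖ ‖a‖ with h | h <;> simp [h]
      _ ≤ _ := add_le_add (pi_norm_pow_le_sum_pow a two_ne_zero)
          (pi_norm_pow_le_sum_pow b two_ne_zero)
  have hsub : ‖a - b‖ ≤ ∑ m, ‖a m - b m‖ := by
    simpa using pi_norm_pow_le_sum_pow (a - b) one_ne_zero
  calc max ‖b‖ ‖a‖ ^ 2 * ‖a - b‖
      ≤ (∑ j, (‖a j‖ ^ 2 + ‖b j‖ ^ 2)) * ∑ m, ‖a m - b m‖ := by gcongr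
    _ = _ := by rw [Finset.sum_mul_sum, Finset.sum_comm]

open ComplexConjugate

section Wirtinger

variable {l : ℕ}

theorem fderiv_apply_eq_sum_wderiv (h : (Fin l → ℂ) → ℂ) (z v : Fin l → ℂ) :
    fderiv ℝ h z v = ∑ m, (wderiv h m z * v m + wderivBar h m z * conj (v m)) := by
  conv_lhs => rw [← Finset.univ_sum_single v]
  rw [map_sum]
  refine Finset.sum_congr rfl fun m _ => ?_
  have hsingle : Pi.single m (v m) = (v m).re • (Pi.single m 1 : Fin l → ℂ)
      + (v m).im • (Pi.single m I : Fin l → ℂ) := by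
    rw [← Pi.single_smul, ← Pi.single_smul, ← Pi.single_add, real_smul, real_smul, mul_one,
      re_add_im]
  have hconj : conj (v m) = (v m).re - (v m).im * I := Complex.ext (by simp) (by simp)
  rw [hsingle, map_add, map_smul, map_smul, real_smul, real_smul, wderiv, wderivBar]
  set a := fderiv ℝ h z (Pi.single m 1)
  set b := fderiv ℝ h z (Pi.single m I)
  linear_combination (-(1 / 2) * (a - I * b)) * (re_add_im (v m)).symm
    + (-(1 / 2) * (a + I * b)) * hconj + (v m).im * b * I_sq

theorem re_fderiv_apply_eq_sum (h : (Fin l → ℂ) → ℂ) (z v : Fin l → ℂ) :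
    (fderiv ℝ h z v).re = ∑ m, ((wderivBar h m z + conj (wderiv h m z)) * conj (v m)).re := by
  rw [fderiv_apply_eq_sum_wderiv, re_sum]
  refine Finset.sum_congr rfl fun m _ => ?_
  simp only [add_re, mul_re, add_im, conj_re, conj_im]
  ring

theorem norm_fderiv_le_sum_wderiv (h : (Fin l → ℂ) → ℂ) (z : Fin l → ℂ) :
    ‖fderiv ℝ h z‖ ≤ ∑ m, (‖wderiv h m z‖ + ‖wderivBar h m z‖) := by
  refine ContinuousLinearMap.opNorm_le_bound _ (by positivity) fun v => ?_
  rw [fderiv_apply_eq_sum_wderiv, Finset.sum_mul]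
  refine (norm_sum_le _ _).trans (Finset.sum_le_sum fun m _ => ?_)
  have hv : ‖v m‖ ≤ ‖v‖ := norm_le_pi_norm v m
  calc _ ≤ ‖wderiv h m z * v m‖ + ‖wderivBar h m z * conj (v m)‖ := norm_add_le _ _
    _ = (‖wderiv h m z‖ + ‖wderivBar h m z‖) * ‖v m‖ := by
        rw [norm_mul, norm_mul, RCLike.norm_conj, add_mul]
    _ ≤ _ := by gcongr

theorem norm_fderiv_re_le_sum {F : (Fin l → ℂ) → ℂ} {z : Fin l → ℂ}
    (hF : DifferentiableAt ℝ F z) :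
    ‖fderiv ℝ (fun x => (F x).re) z‖ ≤ ∑ m, ‖wderivBar F m z + conj (wderiv F m z)‖ := by
  have hD : HasFDerivAt (fun x => (F x).re) (reCLM.comp (fderiv ℝ F z)) z :=
    reCLM.hasFDerivAt.comp z hF.hasFDerivAt
  rw [hD.fderiv]
  refine ContinuousLinearMap.opNorm_le_bound _ (by positivity) fun v => ?_
  rw [ContinuousLinearMap.comp_apply, reCLM_apply, re_fderiv_apply_eq_sum, Finset.sum_mul]
  refine (norm_sum_le _ _).trans (Finset.sum_le_sum fun m _ => ?_)
  calc _ ≤ ‖(wderivBar F m z + conj (wderiv F m z)) * conj (v m)‖ := abs_re_le_norm _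
    _ ≤ _ := by rw [norm_mul, RCLike.norm_conj]; gcongr; exact norm_le_pi_norm v m

theorem isPosHomogeneous_wderivBar_add_conj_wderiv {F : (Fin l → ℂ) → ℂ} {n : ℕ}
    (hF : IsPosHomogeneous n (fderiv ℝ F)) (k : Fin l) :
    IsPosHomogeneous n fun z => wderivBar F k z + conj (wderiv F k z) := by
  intro c hc z
  simp only [wderiv, wderivBar, hF c hc z, FunLike.coe_smul, Pi.smul_apply, real_smul,
    map_mul, map_sub, map_pow, conj_ofReal, map_div₀, map_one, map_ofNat, conj_I, ofReal_pow]
  ring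

theorem norm_apply_le_of_wderiv_lipschitz {f : (Fin l → ℂ) → ℂ} {C : ℝ} (hC : 0 ≤ C)
    (hf : Differentiable ℝ f) (hf0 : f 0 = 0) (hDf0 : fderiv ℝ f 0 = 0)
    (hlip : ∀ (z z' : Fin l → ℂ) (m : Fin l),
      ‖wderiv f m z - wderiv f m z'‖ ≤ C * ∑ j, ‖z j - z' j‖ ∧
      ‖wderivBar f m z - wderivBar f m z'‖ ≤ C * ∑ j, ‖z j - z' j‖)
    (w : Fin l → ℂ) : ‖f w‖ ≤ 2 * C * l ^ 2 * ‖w‖ ^ 2 := by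
  have hDf : ∀ u, ‖fderiv ℝ f u‖ ≤ 2 * C * l ^ 2 * ‖u‖ ^ 1 := by
    intro u
    have hsum : ∑ j, ‖u j‖ ≤ l * ‖u‖ := by
      simpa using Finset.sum_le_card_nsmul Finset.univ _ _ fun j _ => norm_le_pi_norm u j
    have hw : ∀ m, ‖wderiv f m u‖ + ‖wderivBar f m u‖ ≤ 2 * (C * (l * ‖u‖)) := by
      intro m
      have hw0 : wderiv f m 0 = 0 ∧ wderivBar f m 0 = 0 := by simp [wderiv, wderivBar, hDf0]
      obtain ⟨h1, h2⟩ := hlip u 0 m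
      simp only [hw0, sub_zero, Pi.zero_apply] at h1 h2
      have := mul_le_mul_of_nonneg_left hsum hC
      linarith
    calc ‖fderiv ℝ f u‖ ≤ ∑ m, (‖wderiv f m u‖ + ‖wderivBar f m u‖) :=
          norm_fderiv_le_sum_wderiv f u
      _ ≤ ∑ _m : Fin l, 2 * (C * (l * ‖u‖)) := Finset.sum_le_sum fun m _ => hw m
      _ = _ := by
        rw [Finset.sum_const, Finset.card_univ, Fintype.card_fin, nsmul_eq_mul]; ring
  simpa [hf0, sq, mul_assoc] using
    norm_sub_le_of_norm_fderiv_le_mul_pow hf (by positivity) hDf w 0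

end Wirtinger

theorem stmt_7 (l : ℕ) (hl : 1 ≤ l) (C : ℝ) (hC : 0 < C) :
    ∃ C' : ℝ, 0 < C' ∧
      ∀ (F : (Fin l → ℂ) → ℂ) (f : Fin l → (Fin l → ℂ) → ℂ),
        Differentiable ℝ F →
        -- F is homogeneous of degree 3
        (∀ (c : ℝ), 0 < c → ∀ z : Fin l → ℂ,
          F (fun j => (c : ℂ) * z j) = (c : ℂ) ^ 3 * F z) →
        -- (H3)
        (∀ (k : Fin l) (z : Fin l → ℂ),
          f k z = wderivBar F k z + (starRingEnd ℂ) (wderiv F k z)) →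
        (∀ k, Differentiable ℝ (f k)) →
        -- (H1)
        (∀ k, f k 0 = 0) →
        -- (H2)
        (∀ (z z' : Fin l → ℂ) (k m : Fin l),
          ‖wderiv (f k) m z - wderiv (f k) m z'‖ ≤ C * ∑ j, ‖z j - z' j‖ ∧
          ‖wderivBar (f k) m z - wderivBar (f k) m z'‖ ≤ C * ∑ j, ‖z j - z' j‖) →
        ∀ z z' : Fin l → ℂ,
          |(F z).re - (F z').re| ≤
            C' * ∑ m, ∑ j, (‖z j‖ ^ 2 + ‖z' j‖ ^ 2) * ‖z m - z' m‖ ∧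
          |(F z).re| ≤ C' * ∑ j, ‖z j‖ ^ 3 := by
  refine ⟨2 * C * l ^ 3, by positivity, ?_⟩
  intro F f hF hhom hf3 hfd hf1 hf2 z z'
  have hF3 : IsPosHomogeneous 3 F := fun c hc w => by
    rw [real_smul, ofReal_pow, ← hhom c hc w]
    rfl
  have hf : ∀ k, IsPosHomogeneous 2 (f k) := fun k => by
    simpa only [← funext (hf3 k)] using isPosHomogeneous_wderivBar_add_conj_wderiv hF3.fderiv k
  have hfk : ∀ k w, ‖f k w‖ ≤ 2 * C * l ^ 2 * ‖w‖ ^ 2 := fun k =>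
    norm_apply_le_of_wderiv_lipschitz hC.le (hfd k) (hf1 k)
      ((hf k).fderiv.map_zero one_ne_zero) fun w w' m => hf2 w w' k m
  have hDRe : ∀ w, ‖fderiv ℝ (fun x => (F x).re) w‖ ≤ 2 * C * l ^ 3 * ‖w‖ ^ 2 := fun w =>
    calc _ ≤ ∑ k, ‖f k w‖ := by simpa only [← hf3] using norm_fderiv_re_le_sum (hF w)
      _ ≤ ∑ _k : Fin l, 2 * C * l ^ 2 * ‖w‖ ^ 2 := Finset.sum_le_sum fun k _ => hfk k w
      _ = _ := by
        rw [Finset.sum_const, Finset.card_univ, Fintype.card_fin, nsmul_eq_mul]; ring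
  have hRe := norm_sub_le_of_norm_fderiv_le_mul_pow (reCLM.differentiable.comp hF)
    (by positivity) hDRe
  refine ⟨?_, ?_⟩
  · calc |(F z).re - (F z').re| ≤ 2 * C * l ^ 3 * max ‖z'‖ ‖z‖ ^ 2 * ‖z - z'‖ := hRe z z'
      _ ≤ _ := by rw [mul_assoc]; gcongr; exact max_sq_mul_norm_sub_le z z'
  · calc |(F z).re| = |(F z).re - (F 0).re| := by
          rw [hF3.map_zero three_ne_zero, zero_re, sub_zero]
      _ ≤ 2 * C * l ^ 3 * ‖z‖ ^ 3 := by simpa [pow_succ, mul_assoc] using hRe z 0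
      _ ≤ _ := by gcongr; exact pi_norm_pow_le_sum_pow z three_ne_zero
end

section
/- Let I ⊆ ℝ be an open interval with 0 ∈ I. Let a ∈ ℝ, b > 0 and q > 1, set γ = (bq)^{−1/(q−1)} and define f : [0,∞) → ℝ by f(r) = a − r + b r^q. Let G : I → ℝ be continuous and nonnegative with f(G(t)) ≥ 0 for all t ∈ I, and assume a < (1 − 1/q) γ. Then: (i) if G(0) < γ, then G(t) < γ for all t ∈ I; (ii) if G(0) > γ, then G(t) > γ for all t ∈ I. -/
/-!
At `γ = (b q)^{-1/(q-1)}` one has `b γ^q = γ / q`, so `f γ = a - (1 - 1/q) γ < 0`. Hence `G`,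
which satisfies `f ∘ G ≥ 0`, never takes the value `γ` on `I`; since `I` is an interval and `G` is
continuous, the intermediate value theorem keeps `G` on the side of `γ` where `G 0` lies.
-/

open Real

theorem Real.mul_rpow_rpow_neg_inv_sub_one {c q : ℝ} (hc : 0 < c) (hq : q ≠ 1) :
    c * (c ^ (-(1 / (q - 1)))) ^ q = c ^ (-(1 / (q - 1))) := by
  have hq1 : q - 1 ≠ 0 := sub_ne_zero.mpr hq
  rw [← rpow_mul hc.le]
  nth_rewrite 1 [← rpow_one c]
  rw [← rpow_add hc]
  congr 1
  field_simp
  ring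

section IntermediateValue

variable {X : Type*} [TopologicalSpace X] {I : Set X} {G : X → ℝ} {γ : ℝ} {x y : X}

theorem IsPreconnected.lt_of_lt_of_forall_ne (hI : IsPreconnected I) (hG : ContinuousOn G I)
    (hne : ∀ t ∈ I, G t ≠ γ) (hx : x ∈ I) (hy : y ∈ I) (hxγ : G x < γ) : G y < γ := by
  by_contra! hγy
  obtain ⟨s, hs, hGs⟩ := hI.intermediate_value hx hy hG ⟨hxγ.le, hγy⟩
  exact hne s hs hGs

theorem IsPreconnected.lt_of_gt_of_forall_ne (hI : IsPreconnected I) (hG : ContinuousOn G I)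
    (hne : ∀ t ∈ I, G t ≠ γ) (hx : x ∈ I) (hy : y ∈ I) (hxγ : γ < G x) : γ < G y :=
  neg_lt_neg_iff.mp <| hI.lt_of_lt_of_forall_ne hG.neg (fun t ht h => hne t ht (neg_injective h))
    hx hy (neg_lt_neg hxγ)

end IntermediateValue

theorem stmt_13_general (I : Set ℝ) (hIinterval : I.OrdConnected)
    (h0I : (0 : ℝ) ∈ I)
    (a b q : ℝ) (hb : 0 < b) (hq : 1 < q)
    (γ : ℝ) (hγ : γ = (b * q) ^ (-(1 / (q - 1))))
    (f : ℝ → ℝ) (hf : ∀ r : ℝ, 0 ≤ r → f r = a - r + b * r ^ q)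
    (G : ℝ → ℝ) (hGcont : ContinuousOn G I)
    (hfG : ∀ t ∈ I, 0 ≤ f (G t))
    (ha : a < (1 - 1 / q) * γ) :
    (G 0 < γ → ∀ t ∈ I, G t < γ) ∧ (γ < G 0 → ∀ t ∈ I, γ < G t) := by
  have hq0 : 0 < q := one_pos.trans hq
  have hbq : 0 < b * q := mul_pos hb hq0
  have hγpos : 0 < γ := hγ ▸ rpow_pos_of_pos hbq _
  have hbγ : b * γ ^ q = γ / q := by
    rw [eq_div_iff hq0.ne', mul_right_comm]
    exact hγ ▸ mul_rpow_rpow_neg_inv_sub_one hbq hq.ne'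
  have hfγ : f γ < 0 := by
    rw [hf γ hγpos.le, hbγ]
    linarith [show (1 - 1 / q) * γ = γ - γ / q by ring]
  have hne : ∀ t ∈ I, G t ≠ γ := fun t ht hGt => (hfG t ht).not_gt (hGt ▸ hfγ)
  have hI : IsPreconnected I := hIinterval.isPreconnected
  exact ⟨fun h0 t ht => hI.lt_of_lt_of_forall_ne hGcont hne h0I ht h0,
    fun h0 t ht => hI.lt_of_gt_of_forall_ne hGcont hne h0I ht h0⟩

theorem stmt_13 (I : Set ℝ) (hIopen : IsOpen I) (hIinterval : I.OrdConnected)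
    (h0I : (0 : ℝ) ∈ I)
    (a b q : ℝ) (hb : 0 < b) (hq : 1 < q)
    (γ : ℝ) (hγ : γ = (b * q) ^ (-(1 / (q - 1))))
    (f : ℝ → ℝ) (hf : ∀ r : ℝ, 0 ≤ r → f r = a - r + b * r ^ q)
    (G : ℝ → ℝ) (hGcont : ContinuousOn G I) (hGnonneg : ∀ t ∈ I, 0 ≤ G t)
    (hfG : ∀ t ∈ I, 0 ≤ f (G t))
    (ha : a < (1 - 1 / q) * γ) :
    (G 0 < γ → ∀ t ∈ I, G t < γ) ∧ (γ < G 0 → ∀ t ∈ I, γ < G t) :=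
  stmt_13_general I hIinterval h0I a b q hb hq γ hγ f hf G hGcont hfG ha
end

section
/- Let I ⊆ ℝ be an open interval with 0 ∈ I. Let a ∈ ℝ, b > 0 and q > 1, set γ = (bq)^{−1/(q−1)} and define f : [0,∞) → ℝ by f(r) = a − r + b r^q. Let δ₁ ∈ (0,1). Then there exists δ₂ > 0, depending only on δ₁ and q, such that for every continuous nonnegative function G : I → ℝ with f(G(t)) ≥ 0 for all t ∈ I, if a < (1 − δ₁)(1 − 1/q) γ and G(0) > γ, then G(t) > (1 + δ₂) γ for all t ∈ I. -/
/-!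
Put `γ = (b q)^(-1/(q-1))`, so that `b γ^q = γ / q`. Writing `r = s γ` gives
`f r = a - γ φ s` with `φ s = s - s^q / q`, whose maximum on `[0, ∞)` is `φ 1 = 1 - 1/q`.
By continuity of `φ` at `1`, on a band `s ∈ [1, 1 + δ₂]` with `δ₂` depending only on `δ₁` and `q`
we have `φ s > (1 - δ₁)(1 - 1/q)`, hence `f < 0` on `[γ, (1 + δ₂) γ]`. So `G` never takes values
in that band, and since `G(I)` is an interval containing `G 0 > γ`, it lies above the band.
-/

open Real Set

lemma IsPreconnected.lt_of_forall_notMem_Icc {α β : Type*} [TopologicalSpace α] [LinearOrder β]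
    [TopologicalSpace β] [OrderClosedTopology β] {s : Set α} (hs : IsPreconnected s) {G : α → β}
    (hG : ContinuousOn G s) {c d : β} (hcd : c ≤ d) (havoid : ∀ t ∈ s, G t ∉ Icc c d) {x : α}
    (hx : x ∈ s) (hcx : c < G x) : ∀ t ∈ s, d < G t := by
  have hdx : d < G x := lt_of_not_ge fun h => havoid x hx ⟨hcx.le, h⟩
  intro t ht
  by_contra! htd
  obtain ⟨u, hu, hGu⟩ : d ∈ G '' s :=
    (hs.image G hG).Icc_subset (mem_image_of_mem G ht) (mem_image_of_mem G hx) ⟨htd, hdx.le⟩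
  exact havoid u hu (by rw [hGu]; exact ⟨hcd, le_rfl⟩)

lemma exists_pos_forall_mem_Icc_sub_lt_sub_rpow_div (q : ℝ) {ε : ℝ} (hε : 0 < ε) :
    ∃ δ > 0, ∀ s ∈ Icc 1 (1 + δ), 1 - 1 / q - ε < s - s ^ q / q := by
  have hφ : ContinuousAt (fun s : ℝ => s - s ^ q / q) 1 :=
    continuousAt_id.sub ((continuousAt_rpow_const 1 q (Or.inl one_ne_zero)).div_const q)
  have hlt : 1 - 1 / q - ε < (fun s : ℝ => s - s ^ q / q) 1 := by simp [hε]
  obtain ⟨η, hη, hball⟩ :=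
    Metric.eventually_nhds_iff.mp (continuousAt_const.eventually_lt hφ hlt)
  refine ⟨η / 2, half_pos hη, fun s hs => hball ?_⟩
  rw [Real.dist_eq, abs_of_nonneg (by linarith [hs.1])]
  linarith [hs.2]

lemma mul_rpow_neg_inv_sub_one {b q : ℝ} (hb : 0 < b) (hq : 1 < q) :
    b * ((b * q) ^ (-(1 / (q - 1)))) ^ q = (b * q) ^ (-(1 / (q - 1))) / q := by
  have hbq : 0 < b * q := by positivity
  set γ := (b * q) ^ (-(1 / (q - 1)))
  have hγ : 0 < γ := rpow_pos_of_pos hbq _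
  have hγq : γ ^ (q - 1) = (b * q)⁻¹ := by
    rw [← rpow_mul hbq.le, ← rpow_neg_one]
    congr 1
    field_simp [(sub_pos.mpr hq).ne']
  rw [← sub_add_cancel q 1, rpow_add_one hγ.ne', hγq, sub_add_cancel]
  field_simp

lemma sub_add_mul_rpow_neg_of_mem_Icc {a b q γ ε δ r : ℝ} (hγ : 0 < γ) (hbγ : b * γ ^ q = γ / q)
    (ha : a ≤ (1 - 1 / q - ε) * γ)
    (hφ : ∀ s ∈ Icc 1 (1 + δ), 1 - 1 / q - ε < s - s ^ q / q) (hr : r ∈ Icc γ ((1 + δ) * γ)) :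
    a - r + b * r ^ q < 0 := by
  set s := r / γ
  have hrs : r = s * γ := (div_mul_cancel₀ r hγ.ne').symm
  have hs : s ∈ Icc 1 (1 + δ) := ⟨(one_le_div hγ).mpr hr.1, (div_le_iff₀ hγ).mpr hr.2⟩
  have hf : a - r + b * r ^ q = a - γ * (s - s ^ q / q) := by
    rw [hrs, mul_rpow (by linarith [hs.1]) hγ.le, mul_left_comm, hbγ]
    ring
  rw [hf]
  nlinarith [hφ s hs]

theorem stmt_14_general (q δ₁ : ℝ) (hq : 1 < q) (hδ₁ : 0 < δ₁) :
    ∃ δ₂ : ℝ, 0 < δ₂ ∧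
      ∀ (I : Set ℝ), IsOpen I → I.OrdConnected → (0 : ℝ) ∈ I →
      ∀ (a b : ℝ), 0 < b →
      ∀ (γ : ℝ), γ = (b * q) ^ (-(1 / (q - 1))) →
      ∀ f : ℝ → ℝ, (∀ r : ℝ, 0 ≤ r → f r = a - r + b * r ^ q) →
      ∀ G : ℝ → ℝ, ContinuousOn G I → (∀ t ∈ I, 0 ≤ G t) →
      (∀ t ∈ I, 0 ≤ f (G t)) →
      a < (1 - δ₁) * ((1 - 1 / q) * γ) →
      γ < G 0 →
      ∀ t ∈ I, (1 + δ₂) * γ < G t := by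
  obtain ⟨δ₂, hδ₂, hφ⟩ :=
    exists_pos_forall_mem_Icc_sub_lt_sub_rpow_div q (ε := δ₁ * (1 - 1 / q))
      (mul_pos hδ₁ (by simp [inv_lt_one_of_one_lt₀ hq]))
  refine ⟨δ₂, hδ₂, fun I _ hI hI0 a b hb γ hγ f hf G hG hGnn hfG ha hG0 => ?_⟩
  have hγpos : 0 < γ := hγ ▸ rpow_pos_of_pos (by positivity) _
  have hband : ∀ t ∈ I, G t ∉ Icc γ ((1 + δ₂) * γ) := fun t ht hGt =>
    (hfG t ht).not_gt <| hf _ (hGnn t ht) ▸ sub_add_mul_rpow_neg_of_mem_Icc hγpos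
      (hγ ▸ mul_rpow_neg_inv_sub_one hb hq) (by linarith) hφ hGt
  exact hI.isPreconnected.lt_of_forall_notMem_Icc hG (by nlinarith) hband hI0 hG0

theorem stmt_14 (q δ₁ : ℝ) (hq : 1 < q) (hδ₁ : 0 < δ₁) (hδ₁' : δ₁ < 1) :
    ∃ δ₂ : ℝ, 0 < δ₂ ∧
      ∀ (I : Set ℝ), IsOpen I → I.OrdConnected → (0 : ℝ) ∈ I →
      ∀ (a b : ℝ), 0 < b →
      ∀ (γ : ℝ), γ = (b * q) ^ (-(1 / (q - 1))) →
      ∀ f : ℝ → ℝ, (∀ r : ℝ, 0 ≤ r → f r = a - r + b * r ^ q) →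
      ∀ G : ℝ → ℝ, ContinuousOn G I → (∀ t ∈ I, 0 ≤ G t) →
      (∀ t ∈ I, 0 ≤ f (G t)) →
      a < (1 - δ₁) * ((1 - 1 / q) * γ) →
      γ < G 0 →
      ∀ t ∈ I, (1 + δ₂) * γ < G t :=
  stmt_14_general q δ₁ hq hδ₁
end
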